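/- arXiv:2601.05068 — 2 statements merged into one kernel-verified Lean document; each statement's English description precedes it below -/
import Mathlib

section
/- For every natural number n and all real numbers b, c, d, e such that (d)_k ≠ 0 and (e)_k ≠ 0 for all integers 0 ≤ k ≤ n, and (b - e - n + 1)_k ≠ 0 for all integers 0 ≤ k ≤ n, the terminating hypergeometric sums satisfy the transformation formula: ∑_{k=0}^{n} ((-n)_k (b)_k (c)_k) / ((d)_k (e)_k k!) = ((e - b)_n / (e)_n) · ∑_{k=0}^{n} ((-n)_k (b)_k (d - c)_k) / ((d)_k (b - e - n + 1)_k k!). -/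
open Finset


/-- Pochhammer symbol (rising factorial) for a real number. -/
noncomputable def poch (a : ℝ) (k : ℕ) : ℝ := (ascPochhammer ℝ k).eval a
lemma poch_zero (a : ℝ) : poch a 0 = 1 := by simp [poch]
lemma poch_succ (a : ℝ) (k : ℕ) : poch a (k+1) = poch a k * (a + k) := by
  simp [poch, ascPochhammer_succ_eval]
lemma poch_add (a : ℝ) (m k : ℕ) : poch a (m+k) = poch a m * poch (a+m) k := by
  induction k with
  | zero => simp [poch_zero]
  | succ k ih =>
      rw [← Nat.add_assoc, poch_succ, ih, poch_succ]
      push_cast; ring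
lemma poch_succ_left (a : ℝ) (k : ℕ) : poch a (k+1) = a * poch (a+1) k := by
  simp [poch, ascPochhammer_succ_left, Polynomial.eval_comp]
lemma poch_reflect (a : ℝ) (k : ℕ) : poch (1 - a - k) k = (-1)^k * poch a k := by
  induction k with
  | zero => simp [poch_zero]
  | succ k ih =>
      have h : (1 : ℝ) - a - (k+1 : ℕ) = (1 - a - k) - 1 := by push_cast; ring
      rw [h, poch_succ_left, sub_add_cancel, ih, poch_succ]
      ring
lemma poch_nat_fac (j m : ℕ) : poch ((j : ℝ) + 1) m * (j.factorial : ℝ) = ((j+m).factorial : ℝ) := by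
  induction m with
  | zero => simp [poch_zero]
  | succ m ih =>
      rw [poch_succ, ← Nat.add_assoc, Nat.factorial_succ]
      push_cast
      nlinarith [ih]
lemma poch_neg_nat (N m : ℕ) (h : m ≤ N) :
    poch (-(N : ℝ)) m * ((N - m).factorial : ℝ) = (-1)^m * (N.factorial : ℝ) := by
  have h1 : (-(N : ℝ)) = 1 - (((N - m : ℕ) : ℝ) + 1) - m := by
    push_cast [Nat.cast_sub h]; ring
  rw [h1, poch_reflect, mul_assoc, poch_nat_fac]
  congr 3
  omega
lemma poch_vandermonde (N : ℕ) (x y : ℝ) :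
    poch (x + y) N = ∑ m ∈ range (N+1), (N.choose m : ℝ) * poch x m * poch y (N - m) := by
  induction N with
  | zero => simp [poch_zero]
  | succ N ih =>
      have S1 : ∑ m ∈ range (N+1), (N.choose m : ℝ) * poch x m * poch y (N-m) * (y + (N - m : ℕ))
          = ∑ m ∈ range (N+1), (N.choose m : ℝ) * poch x m * poch y (N+1-m) := by
        refine sum_congr rfl fun m hm => ?_
        have hm' : m ≤ N := by simpa [Nat.lt_succ_iff] using hm
        have : N + 1 - m = (N - m) + 1 := by omega
        rw [this, poch_succ]; ring
      have S2 : ∑ m ∈ range (N+1), (N.choose m : ℝ) * poch x m * poch y (N-m) * (x + m)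
          = ∑ m ∈ range (N+1), (N.choose m : ℝ) * poch x (m+1) * poch y (N-m) := by
        refine sum_congr rfl fun m hm => ?_
        rw [poch_succ]; ring
      have key : ∑ m ∈ range (N+2), ((N+1).choose m : ℝ) * poch x m * poch y (N+1-m)
          = (∑ m ∈ range (N+1), (N.choose m : ℝ) * poch x m * poch y (N+1-m))
            + ∑ m ∈ range (N+1), (N.choose m : ℝ) * poch x (m+1) * poch y (N-m) := by
        rw [Finset.sum_range_succ' (fun m => ((N+1).choose m : ℝ) * poch x m * poch y (N+1-m))]
        rw [Finset.sum_range_succ' (fun m => (N.choose m : ℝ) * poch x m * poch y (N+1-m))]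
        have hsplit : ∀ m, (((N+1).choose (m+1) : ℕ) : ℝ) = (N.choose m : ℝ) + (N.choose (m+1) : ℝ) := by
          intro m; rw [Nat.choose_succ_succ]; push_cast; ring
        have htrunc : ∑ m ∈ range (N+1), (N.choose (m+1) : ℝ) * poch x (m+1) * poch y (N+1-(m+1))
            = ∑ m ∈ range N, (N.choose (m+1) : ℝ) * poch x (m+1) * poch y (N+1-(m+1)) := by
          rw [Finset.sum_range_succ]; simp
        calc (∑ m ∈ range (N+1), ((N+1).choose (m+1) : ℝ) * poch x (m+1) * poch y (N+1-(m+1)))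
              + ((N+1).choose 0 : ℝ) * poch x 0 * poch y (N+1-0)
            = (∑ m ∈ range (N+1), ((N.choose m : ℝ) * poch x (m+1) * poch y (N-m)
                + (N.choose (m+1) : ℝ) * poch x (m+1) * poch y (N+1-(m+1))))
              + ((N+1).choose 0 : ℝ) * poch x 0 * poch y (N+1-0) := by
              refine congrArg (· + _) (sum_congr rfl fun m hm => ?_)
              rw [hsplit m]
              have : N + 1 - (m+1) = N - m := by omega
              rw [this]; ring
          _ = _ := by
              rw [Finset.sum_add_distrib, htrunc]
              simp [Nat.choose_zero_right]
              ring
      rw [key, ← S1, ← S2, poch_succ, ih, Finset.sum_mul, ← Finset.sum_add_distrib]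
      refine sum_congr rfl fun m hm => ?_
      have hm' : m ≤ N := by simpa [Nat.lt_succ_iff] using hm
      have hc : ((N - m : ℕ) : ℝ) = (N : ℝ) - (m : ℕ) := by
        push_cast [Nat.cast_sub hm']; ring
      rw [hc]; ring

lemma gauss_poly (N : ℕ) (B C : ℝ) :
    ∑ m ∈ range (N+1), (-1:ℝ)^m * (N.choose m : ℝ) * poch B m * poch (C + m) (N - m)
      = poch (C - B) N := by
  have hrefl : poch (C - B) N = (-1:ℝ)^N * poch (B + (1 - C - N)) N := by
    have h := poch_reflect (C - B) N
    have e1 : (1 : ℝ) - (C - B) - N = B + (1 - C - N) := by ring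
    rw [e1] at h
    rw [h, ← mul_assoc, ← pow_add]
    rw [Even.neg_one_pow ⟨N, rfl⟩, one_mul]
  rw [hrefl, poch_vandermonde, Finset.mul_sum]
  refine (sum_congr rfl fun m hm => ?_).symm
  have hm' : m ≤ N := Nat.lt_succ_iff.mp (Finset.mem_range.mp hm)
  have e2 : (1 : ℝ) - C - N = 1 - (C + m) - ((N - m : ℕ) : ℝ) := by
    push_cast [Nat.cast_sub hm']; ring
  rw [e2, poch_reflect]
  have hone : ((-1:ℝ))^(N-m) * (-1)^(N-m) = 1 := by
    rw [← pow_add]; exact Even.neg_one_pow ⟨N-m, rfl⟩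
  have hs : (-1:ℝ)^N = (-1)^m * (-1)^(N-m) := by
    rw [← pow_add]; congr 1; omega
  rw [hs]
  linear_combination ((-1:ℝ)^m * (N.choose m : ℝ) * poch B m * poch (C + m) (N - m)) * hone

lemma gauss_sum (N : ℕ) (B C : ℝ) (hC : ∀ m, m ≤ N → poch C m ≠ 0) :
    ∑ m ∈ range (N+1), poch (-(N:ℝ)) m * poch B m / (poch C m * (m.factorial : ℝ))
      = poch (C - B) N / poch C N := by
  rw [← gauss_poly N B C, Finset.sum_div]
  refine Finset.sum_congr rfl fun m hm => ?_
  have hm' : m ≤ N := Nat.lt_succ_iff.mp (Finset.mem_range.mp hm)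
  have hCN : poch C N = poch C m * poch (C + m) (N - m) := by
    rw [← poch_add]; congr 1; omega
  have hneg := poch_neg_nat N m hm'
  have hch : (N.choose m : ℝ) * (m.factorial : ℝ) * ((N-m).factorial : ℝ) = (N.factorial : ℝ) := by
    exact_mod_cast congrArg (Nat.cast : ℕ → ℝ) (Nat.choose_mul_factorial_mul_factorial hm')
  have h1 : poch C m ≠ 0 := hC m hm'
  have h2 : poch (C+m) (N-m) ≠ 0 := fun h => (hC N le_rfl) (by rw [hCN, h, mul_zero])
  have h3 : (m.factorial : ℝ) ≠ 0 := Nat.cast_ne_zero.mpr m.factorial_ne_zero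
  have h4 : ((N-m).factorial : ℝ) ≠ 0 := Nat.cast_ne_zero.mpr (N-m).factorial_ne_zero
  have hP : poch (-(N:ℝ)) m = (-1)^m * (N.choose m : ℝ) * (m.factorial : ℝ) := by
    apply mul_right_cancel₀ h4
    rw [hneg, ← hch]; ring
  rw [hCN, hP]
  field_simp

noncomputable def Faux (n : ℕ) (b c d e : ℝ) (k j : ℕ) : ℝ :=
  (poch (-(n:ℝ)) k * poch b k / (poch (b - e - (n:ℝ) + 1) k * (k.factorial : ℝ))) *
    (poch (-(k:ℝ)) j * poch c j / (poch d j * (j.factorial : ℝ)))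

noncomputable def Iaux (n : ℕ) (b c d e : ℝ) (j : ℕ) : ℝ :=
  ((-1:ℝ)^j * poch (-(n:ℝ)) j * poch b j * poch c j /
      (poch (b - e - (n:ℝ) + 1) j * poch d j * (j.factorial : ℝ))) *
    (poch (1 - e - (n:ℝ)) (n-j) / poch (b - e - (n:ℝ) + 1 + j) (n-j))


/-- Transformation formula for terminating ₃F₂(1) series (special case of Bailey 3.8(1)):
∑_{k=0}^{n} ((-n)_k (b)_k (c)_k) / ((d)_k (e)_k k!)
  = ((e-b)_n / (e)_n) ∑_{k=0}^{n} ((-n)_k (b)_k (d-c)_k) / ((d)_k (b-e-n+1)_k k!). -/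
theorem hyp32_transformation (n : ℕ) (b c d e : ℝ)
    (hd : ∀ k : ℕ, k ≤ n → poch d k ≠ 0)
    (he : ∀ k : ℕ, k ≤ n → poch e k ≠ 0)
    (hbe : ∀ k : ℕ, k ≤ n → poch (b - e - n + 1) k ≠ 0) :
    ∑ k ∈ Finset.range (n + 1),
        (poch (-(n : ℝ)) k * poch b k * poch c k) /
          (poch d k * poch e k * (Nat.factorial k : ℝ))
      = (poch (e - b) n / poch e n) *
        ∑ k ∈ Finset.range (n + 1),
          (poch (-(n : ℝ)) k * poch b k * poch (d - c) k) /
            (poch d k * poch (b - e - n + 1) k * (Nat.factorial k : ℝ)) := by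
  have hBene : ∀ j m : ℕ, j + m ≤ n → poch (b - e - (n:ℝ) + 1 + j) m ≠ 0 := by
    intro j m h hzero
    exact hbe (j+m) h (by rw [poch_add, hzero, mul_zero])
  -- Step 1: expand each summand of the RHS sum via the Gauss sum
  have step1 : ∀ k ∈ Finset.range (n+1),
      (poch (-(n : ℝ)) k * poch b k * poch (d - c) k) /
          (poch d k * poch (b - e - n + 1) k * (Nat.factorial k : ℝ))
        = ∑ j ∈ Finset.range (k+1), Faux n b c d e k j := by
    intro k hk
    have hkn : k ≤ n := Nat.lt_succ_iff.mp (Finset.mem_range.mp hk)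
    have hg := gauss_sum k c d (fun m hm => hd m (hm.trans hkn))
    calc (poch (-(n : ℝ)) k * poch b k * poch (d - c) k) /
          (poch d k * poch (b - e - n + 1) k * (Nat.factorial k : ℝ))
        = (poch (-(n:ℝ)) k * poch b k / (poch (b - e - (n:ℝ) + 1) k * (k.factorial : ℝ))) *
            (poch (d - c) k / poch d k) := by
          rw [div_mul_div_comm,
            show poch d k * poch (b - e - (n:ℝ) + 1) k * (k.factorial : ℝ)
              = poch (b - e - (n:ℝ) + 1) k * (k.factorial : ℝ) * poch d k from by ring]
      _ = (poch (-(n:ℝ)) k * poch b k / (poch (b - e - (n:ℝ) + 1) k * (k.factorial : ℝ))) *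
            ∑ j ∈ Finset.range (k+1), poch (-(k:ℝ)) j * poch c j / (poch d j * (j.factorial : ℝ)) := by
          rw [hg]
      _ = ∑ j ∈ Finset.range (k+1), Faux n b c d e k j := by
          rw [Finset.mul_sum]; rfl
  -- Step 2: swap the order of summation
  have swap : ∑ k ∈ Finset.range (n+1), ∑ j ∈ Finset.range (k+1), Faux n b c d e k j
      = ∑ j ∈ Finset.range (n+1), ∑ k ∈ Finset.Ico j (n+1), Faux n b c d e k j := by
    have h := Finset.sum_Ico_Ico_comm 0 (n+1) (fun i j => Faux n b c d e j i)
    rw [Finset.range_eq_Ico, h]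
    simp only [Finset.range_eq_Ico]
  -- Step 3: evaluate the inner sums via the Gauss sum again
  have step3 : ∀ j ∈ Finset.range (n+1),
      ∑ k ∈ Finset.Ico j (n+1), Faux n b c d e k j = Iaux n b c d e j := by
    intro j hj
    have hjn : j ≤ n := Nat.lt_succ_iff.mp (Finset.mem_range.mp hj)
    rw [Finset.sum_Ico_eq_sum_range]
    have hnj : n + 1 - j = (n - j) + 1 := by omega
    rw [hnj]
    have hterm : ∀ m ∈ Finset.range ((n-j)+1), Faux n b c d e (j+m) j
        = ((-1:ℝ)^j * poch (-(n:ℝ)) j * poch b j * poch c j /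
            (poch (b - e - (n:ℝ) + 1) j * poch d j * (j.factorial : ℝ))) *
          (poch (-((n-j : ℕ):ℝ)) m * poch (b + (j:ℝ)) m /
            (poch (b - e - (n:ℝ) + 1 + j) m * (m.factorial : ℝ))) := by
      intro m hm
      have hmn : m ≤ n - j := Nat.lt_succ_iff.mp (Finset.mem_range.mp hm)
      have hjmn : j + m ≤ n := by omega
      have hn1 : poch (-(n:ℝ)) (j+m) = poch (-(n:ℝ)) j * poch (-((n-j : ℕ):ℝ)) m := by
        rw [poch_add]
        congr 2
        push_cast [Nat.cast_sub hjn]; ring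
      have hb2 : poch b (j+m) = poch b j * poch (b + (j:ℝ)) m := poch_add b j m
      have hB2 : poch (b - e - (n:ℝ) + 1) (j+m)
          = poch (b - e - (n:ℝ) + 1) j * poch (b - e - (n:ℝ) + 1 + j) m :=
        poch_add _ j m
      have h4 : (m.factorial : ℝ) ≠ 0 := Nat.cast_ne_zero.mpr m.factorial_ne_zero
      have hP : poch (-((j+m : ℕ):ℝ)) j
          = (-1)^j * ((j+m).factorial : ℝ) / (m.factorial : ℝ) := by
        rw [eq_div_iff h4]
        have := poch_neg_nat (j+m) j (Nat.le_add_right j m)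
        simpa using this
      have h1 : poch d j ≠ 0 := hd j hjn
      have h2 : poch (b - e - (n:ℝ) + 1) j ≠ 0 := hbe j hjn
      have h2' : poch (b - e - (n:ℝ) + 1 + j) m ≠ 0 := hBene j m hjmn
      have h3 : (j.factorial : ℝ) ≠ 0 := Nat.cast_ne_zero.mpr j.factorial_ne_zero
      have h5 : ((j+m).factorial : ℝ) ≠ 0 := Nat.cast_ne_zero.mpr (j+m).factorial_ne_zero
      simp only [Faux]
      rw [hn1, hb2, hB2, hP]
      field_simp
    rw [Finset.sum_congr rfl hterm, ← Finset.mul_sum]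
    have hg := gauss_sum (n-j) (b + (j:ℝ)) (b - e - (n:ℝ) + 1 + j)
      (fun m hm => hBene j m (by omega))
    have harg : b - e - (n:ℝ) + 1 + j - (b + (j:ℝ)) = 1 - e - (n:ℝ) := by ring
    rw [harg] at hg
    rw [hg]
    rfl
  -- Put everything together
  have e2 : (∑ k ∈ Finset.range (n + 1),
      (poch (-(n : ℝ)) k * poch b k * poch (d - c) k) /
        (poch d k * poch (b - e - n + 1) k * (Nat.factorial k : ℝ)))
      = ∑ j ∈ Finset.range (n+1), Iaux n b c d e j := by
    rw [Finset.sum_congr rfl step1, swap]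
    exact Finset.sum_congr rfl step3
  rw [e2, Finset.mul_sum]
  refine Finset.sum_congr rfl fun j hj => ?_
  have hjn : j ≤ n := Nat.lt_succ_iff.mp (Finset.mem_range.mp hj)
  have hi : poch (b - e - (n:ℝ) + 1) n
      = poch (b - e - (n:ℝ) + 1) j * poch (b - e - (n:ℝ) + 1 + j) (n-j) := by
    rw [← poch_add]; congr 1; omega
  have hsq : ((-1:ℝ))^n * (-1)^n = 1 := by
    rw [← pow_add]; exact Even.neg_one_pow ⟨n, rfl⟩
  have hii' : poch (b - e - (n:ℝ) + 1) n = (-1)^n * poch (e - b) n := by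
    have e0 : b - e - (n:ℝ) + 1 = 1 - (e - b) - n := by ring
    rw [e0]; exact poch_reflect (e - b) n
  have hii2 : poch (e - b) n
      = (-1:ℝ)^n * (poch (b - e - (n:ℝ) + 1) j * poch (b - e - (n:ℝ) + 1 + j) (n-j)) := by
    rw [← hi, hii', ← mul_assoc, hsq, one_mul]
  have hiii : poch (1 - e - (n:ℝ)) (n-j) = (-1)^(n-j) * poch (e + (j:ℝ)) (n-j) := by
    have e1 : (1:ℝ) - e - (n:ℝ) = 1 - (e + (j:ℝ)) - ((n-j : ℕ):ℝ) := by
      push_cast [Nat.cast_sub hjn]; ring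
    rw [e1]; exact poch_reflect _ _
  have hiv : poch e n = poch e j * poch (e + (j:ℝ)) (n-j) := by
    rw [← poch_add]; congr 1; omega
  have hAXY : ((-1:ℝ))^n * ((-1)^j * (-1)^(n-j)) = 1 := by
    rw [show ((-1:ℝ))^j * (-1)^(n-j) = (-1)^n from by rw [← pow_add]; congr 1; omega, hsq]
  have hkey : poch (e - b) n * poch (1 - e - (n:ℝ)) (n-j) * ((-1:ℝ)^j)
      = poch (b - e - (n:ℝ) + 1) j * poch (b - e - (n:ℝ) + 1 + j) (n-j)
        * poch (e + (j:ℝ)) (n-j) := by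
    rw [hii2, hiii]
    linear_combination (poch (b - e - (n:ℝ) + 1) j * poch (b - e - (n:ℝ) + 1 + j) (n-j)
      * poch (e + (j:ℝ)) (n-j)) * hAXY
  have h1 : poch d j ≠ 0 := hd j hjn
  have h2 : poch (b - e - (n:ℝ) + 1) j ≠ 0 := hbe j hjn
  have h2' : poch (b - e - (n:ℝ) + 1 + j) (n-j) ≠ 0 := hBene j (n-j) (by omega)
  have h3 : (j.factorial : ℝ) ≠ 0 := Nat.cast_ne_zero.mpr j.factorial_ne_zero
  have h4 : poch e n ≠ 0 := he n le_rfl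
  have h5 : poch e j ≠ 0 := he j hjn
  have h6 : poch (e + (j:ℝ)) (n-j) ≠ 0 := fun h => h4 (by rw [hiv, h, mul_zero])
  simp only [Iaux]
  rw [hiv]
  field_simp
  linear_combination (-(poch (-(n:ℝ)) j * poch b j * poch c j)) * hkey
end

section
/- Let α, β be real numbers with α > -1 and β > -1, let m ≥ 2 be an integer and n a natural number with 1 ≤ n ≤ m - 2. Define g : ℤ → ℝ by g(x) = (Γ(x + α + n)/Γ(x)) · (Γ(m - x + β + n)/Γ(m - x - n)) for integers x with 1 ≤ x ≤ m - 1 - n and g(x) = 0 for all other integers x, and let Δⁿg(x) = ∑_{j=0}^{n} (-1)^{n-j} C(n, j) g(x + j). Then for every natural number r with r < n, the moment orthogonality ∑_{x=1-n}^{m-1} Δⁿg(x) · xʳ = 0 holds. -/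
open Finset fwdDiff

lemma fwdDiff_iter_pow_eq_zero (h : ℤ) (n r : ℕ) (hr : r < n) :
    (fwdDiff h)^[n] (fun t : ℤ ↦ (t : ℝ) ^ r) = 0 := by
  induction n generalizing r with
  | zero => omega
  | succ n IH =>
    have hΔ : fwdDiff h (fun t : ℤ ↦ (t : ℝ) ^ r)
        = ∑ s ∈ Finset.range r,
            (fun t : ℤ ↦ ((r.choose s : ℝ) * (h : ℝ) ^ (r - s)) * (t : ℝ) ^ s) := by
      funext t
      simp only [fwdDiff, Finset.sum_apply]
      have h1 : ((t + h : ℤ) : ℝ) ^ r = ((t : ℝ) + (h : ℝ)) ^ r := by push_cast; ring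
      rw [h1, add_pow, Finset.sum_range_succ]
      simp only [Nat.choose_self, Nat.sub_self, pow_zero, Nat.cast_one, mul_one]
      rw [add_sub_cancel_right]
      exact Finset.sum_congr rfl fun s hs ↦ by ring
    rw [Function.iterate_succ_apply, hΔ, fwdDiff_iter_finset_sum]
    funext y
    simp only [Finset.sum_apply, Pi.zero_apply]
    apply Finset.sum_eq_zero
    intro s hs
    have hs' : s < n := lt_of_lt_of_le (Finset.mem_range.mp hs) (Nat.lt_succ_iff.mp hr)
    have h2 : (fun t : ℤ ↦ ((r.choose s : ℝ) * (h : ℝ) ^ (r - s)) * (t : ℝ) ^ s)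
        = ((r.choose s : ℝ) * (h : ℝ) ^ (r - s)) • (fun t : ℤ ↦ (t : ℝ) ^ s) := by
      funext t; simp [smul_eq_mul]
    rw [h2, fwdDiff_iter_const_smul, IH s hs']
    simp

/-- Key step in Chebyshev's (1875) orthogonality proof: with
g(x) = (Γ(x+α+n)/Γ(x)) (Γ(m-x+β+n)/Γ(m-x-n)) for integers 1 ≤ x ≤ m-1-n and
g(x) = 0 otherwise, the n-th forward difference
Δⁿg(x) = ∑_{j=0}^{n} (-1)^{n-j} C(n,j) g(x+j) satisfies the moment orthogonality
∑_{x=1-n}^{m-1} Δⁿg(x) xʳ = 0 for every r < n. -/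
theorem chebyshev_moment_orthogonality (α β : ℝ) (hα : α > -1) (hβ : β > -1)
    (m : ℤ) (hm : 2 ≤ m) (n : ℕ) (hn1 : 1 ≤ n) (hn2 : (n : ℤ) ≤ m - 2)
    (g : ℤ → ℝ)
    (hg : ∀ x : ℤ, g x =
      if 1 ≤ x ∧ x ≤ m - 1 - n then
        (Real.Gamma ((x : ℝ) + α + n) / Real.Gamma (x : ℝ)) *
          (Real.Gamma ((m : ℝ) - x + β + n) / Real.Gamma ((m : ℝ) - x - n))
      else 0)
    (r : ℕ) (hr : r < n) :
    ∑ x ∈ Finset.Icc (1 - (n : ℤ)) (m - 1),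
        (∑ j ∈ Finset.range (n + 1),
          (-1 : ℝ) ^ (n - j) * (Nat.choose n j : ℝ) * g (x + j)) * (x : ℝ) ^ r = 0 := by
  have hsupp : ∀ y : ℤ, y ∉ Finset.Icc (1 : ℤ) (m - 1 - n) → g y = 0 := by
    intro y hy
    rw [hg y, if_neg]
    simpa [Finset.mem_Icc] using hy
  -- Step 1: distribute and swap
  have step1 : ∑ x ∈ Finset.Icc (1 - (n : ℤ)) (m - 1),
        (∑ j ∈ Finset.range (n + 1),
          (-1 : ℝ) ^ (n - j) * (Nat.choose n j : ℝ) * g (x + j)) * (x : ℝ) ^ r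
      = ∑ j ∈ Finset.range (n + 1), ∑ x ∈ Finset.Icc (1 - (n : ℤ)) (m - 1),
          (-1 : ℝ) ^ (n - j) * (Nat.choose n j : ℝ) * (g (x + j) * (x : ℝ) ^ r) := by
    rw [Finset.sum_comm]
    exact Finset.sum_congr rfl fun x _ ↦ by rw [Finset.sum_mul]; exact Finset.sum_congr rfl fun j _ ↦ by ring
  rw [step1]
  -- Step 2: reindex each inner sum to the support of g
  have step2 : ∀ j ∈ Finset.range (n + 1),
      ∑ x ∈ Finset.Icc (1 - (n : ℤ)) (m - 1), g (x + j) * (x : ℝ) ^ r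
        = ∑ y ∈ Finset.Icc (1 : ℤ) (m - 1 - n), g y * ((y : ℝ) - j) ^ r := by
    intro j hj
    have hj' : (j : ℤ) ≤ n := by exact_mod_cast Nat.lt_succ_iff.mp (Finset.mem_range.mp hj)
    have hmap : ∑ x ∈ Finset.Icc (1 - (n : ℤ)) (m - 1), g (x + j) * (x : ℝ) ^ r
        = ∑ y ∈ Finset.Icc (1 - (n : ℤ) + j) (m - 1 + j), g y * ((y : ℝ) - j) ^ r := by
      rw [← Finset.map_add_right_Icc, Finset.sum_map]
      exact Finset.sum_congr rfl fun x _ ↦ by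
        simp [addRightEmbedding]
    rw [hmap]
    apply (Finset.sum_subset ?_ ?_).symm
    · intro y hy
      simp only [Finset.mem_Icc] at hy ⊢
      omega
    · intro y _ hy
      rw [hsupp y ?_, zero_mul]
      simp only [Finset.mem_Icc] at hy ⊢
      omega
  calc ∑ j ∈ Finset.range (n + 1), ∑ x ∈ Finset.Icc (1 - (n : ℤ)) (m - 1),
          (-1 : ℝ) ^ (n - j) * (Nat.choose n j : ℝ) * (g (x + j) * (x : ℝ) ^ r)
      = ∑ j ∈ Finset.range (n + 1), (-1 : ℝ) ^ (n - j) * (Nat.choose n j : ℝ) *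
          ∑ y ∈ Finset.Icc (1 : ℤ) (m - 1 - n), g y * ((y : ℝ) - j) ^ r := by
        refine Finset.sum_congr rfl fun j hj ↦ ?_
        rw [← Finset.mul_sum, step2 j hj]
    _ = ∑ y ∈ Finset.Icc (1 : ℤ) (m - 1 - n), g y *
          ∑ j ∈ Finset.range (n + 1), (-1 : ℝ) ^ (n - j) * (Nat.choose n j : ℝ) * ((y : ℝ) - j) ^ r := by
        simp_rw [Finset.mul_sum]
        rw [Finset.sum_comm]
        exact Finset.sum_congr rfl fun y _ ↦ Finset.sum_congr rfl fun j _ ↦ by ring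
    _ = 0 := by
        apply Finset.sum_eq_zero
        intro y _
        have key : ∑ j ∈ Finset.range (n + 1),
            (-1 : ℝ) ^ (n - j) * (Nat.choose n j : ℝ) * ((y : ℝ) - j) ^ r = 0 := by
          have := congrFun (fwdDiff_iter_pow_eq_zero (-1) n r hr) y
          rw [fwdDiff_iter_eq_sum_shift] at this
          simp only [Pi.zero_apply] at this
          rw [← this]
          refine Finset.sum_congr rfl fun j _ ↦ ?_
          have : ((y + j • (-1 : ℤ) : ℤ) : ℝ) = (y : ℝ) - j := by
            rw [nsmul_eq_mul, mul_neg_one]; push_cast; ring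
          rw [this, zsmul_eq_mul]
          push_cast
          ring
        rw [key, mul_zero]
end
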